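/- arXiv:1708.00030 — 2 statements merged into one kernel-verified Lean document; each statement's English description precedes it below -/
import Mathlib

section
/- For any real c > 0, real δ ∈ [0,1), and real ℓ ≥ 1, the integral ∫_0^{1/(4c)} (sin(πc(1−δ)v)/(πv)) · (1−v)^{ℓ²} dv is at least (2√2 c(1−δ)/(π(ℓ²+1))) · (1 − (1 − 1/(4c))^{ℓ²+1}), provided 1/(4c) ≤ 1. -/
/-!
For `0 < v ≤ 1/(4c)` the argument `x = πc(1-δ)v` lies in `[0, π/4]`, where concavity of `sin`
gives the chord bound `sin x ≥ (sin (π/4) / (π/4)) x = (2√2/π) x`. So the integrand dominates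
`(2√2 c(1-δ)/π) (1-v)^(ℓ²)`, whose integral over `[0, 1/(4c)]` is explicit.
-/

open Real MeasureTheory intervalIntegral

lemma sin_div_mul_le_sin {b x : ℝ} (hx : 0 ≤ x) (hxb : x ≤ b) (hb : b ≤ π) :
    sin b / b * x ≤ sin x := by
  rcases hx.eq_or_lt with rfl | hx0
  · simp
  have hb0 : 0 < b := hx0.trans_le hxb
  have hconc := strictConcaveOn_sin_Icc.concaveOn.2
    (⟨le_rfl, pi_pos.le⟩ : (0 : ℝ) ∈ Set.Icc 0 π) ⟨hb0.le, hb⟩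
    (sub_nonneg.2 ((div_le_one hb0).2 hxb)) (div_nonneg hx hb0.le) (sub_add_cancel 1 (x / b))
  simp only [smul_eq_mul, mul_zero, sin_zero, zero_add, div_mul_cancel₀ x hb0.ne'] at hconc
  linarith [div_mul_comm (sin b) b x]

lemma two_mul_sqrt_two_div_pi_sq_mul_le_sin_mul_div {a v : ℝ} (ha : 0 ≤ a) (hv : 0 < v)
    (hav : a * v ≤ π / 4) : 2 * √2 / π ^ 2 * a ≤ sin (a * v) / (π * v) := by
  have hsin := sin_div_mul_le_sin (mul_nonneg ha hv.le) hav (by linarith [pi_pos])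
  rw [sin_pi_div_four] at hsin
  rw [le_div_iff₀ (mul_pos pi_pos hv)]
  calc 2 * √2 / π ^ 2 * a * (π * v) = √2 / 2 / (π / 4) * (a * v) := by
        field_simp; ring
    _ ≤ sin (a * v) := hsin

lemma intervalIntegrable_sin_mul_div_mul (a b s t : ℝ) :
    IntervalIntegrable (fun v => sin (a * v) / (b * v)) volume s t := by
  have hsinc : ∀ v ≠ 0, a / b * sinc (a * v) = sin (a * v) / (b * v) := by
    intro v hv
    rcases eq_or_ne a 0 with rfl | ha
    · simp
    rw [sinc_of_ne_zero (mul_ne_zero ha hv), div_mul_div_comm, mul_left_comm,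
      mul_div_mul_left _ _ ha]
  exact ((continuous_const.mul (continuous_sinc.comp (continuous_const_mul a))).intervalIntegrable
    s t).congr_ae (ae_restrict_of_ae ((Measure.ae_ne _ 0).mono hsinc))

lemma integral_one_sub_rpow {p : ℝ} (hp : -1 < p) (T : ℝ) :
    ∫ v in (0 : ℝ)..T, (1 - v) ^ p = (1 - (1 - T) ^ (p + 1)) / (p + 1) := by
  rw [integral_comp_sub_left (fun u => u ^ p), sub_zero, integral_rpow (Or.inl hp), one_rpow]

theorem integral_I1a_lower_general (c δ ℓ : ℝ) (hc : 0 < c) (hδ0 : 0 ≤ δ) (hδ1 : δ < 1)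
    (hc1 : 1 / (4 * c) ≤ 1) :
    ∫ v in (0 : ℝ)..(1 / (4 * c)),
        Real.sin (Real.pi * c * (1 - δ) * v) / (Real.pi * v) * (1 - v) ^ (ℓ ^ 2)
      ≥ 2 * Real.sqrt 2 * c * (1 - δ) / (Real.pi * (ℓ ^ 2 + 1)) *
          (1 - (1 - 1 / (4 * c)) ^ (ℓ ^ 2 + 1)) := by
  set T := 1 / (4 * c) with hT
  set a := π * c * (1 - δ) with ha
  have hT0 : 0 < T := by positivity
  have ha0 : 0 ≤ a := mul_nonneg (by positivity) (by linarith)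
  have haT : a * T ≤ π / 4 := by
    rw [ha, hT, show π * c * (1 - δ) * (1 / (4 * c)) = π / 4 * (1 - δ) by field_simp]
    nlinarith [pi_pos]
  have hpow : Continuous fun v : ℝ => (1 - v) ^ (ℓ ^ 2) :=
    (continuous_const.sub continuous_id).rpow_const fun _ => Or.inr (sq_nonneg ℓ)
  calc ∫ v in (0 : ℝ)..T, sin (a * v) / (π * v) * (1 - v) ^ (ℓ ^ 2)
      ≥ ∫ v in (0 : ℝ)..T, 2 * √2 / π ^ 2 * a * (1 - v) ^ (ℓ ^ 2) := by
        refine integral_mono_on_of_le_Ioo hT0.le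
          ((continuous_const.mul hpow).intervalIntegrable _ _)
          ((intervalIntegrable_sin_mul_div_mul _ _ _ _).mul_continuousOn hpow.continuousOn)
          fun v hv => mul_le_mul_of_nonneg_right ?_ (rpow_nonneg ?_ _)
        · exact two_mul_sqrt_two_div_pi_sq_mul_le_sin_mul_div ha0 hv.1
            ((mul_le_mul_of_nonneg_left hv.2.le ha0).trans haT)
        · linarith [hv.2]
    _ = _ := by
        rw [intervalIntegral.integral_const_mul,
          integral_one_sub_rpow (by linarith [sq_nonneg ℓ])]
        field_simp
        ring

theorem integral_I1a_lower (c δ ℓ : ℝ) (hc : 0 < c) (hδ0 : 0 ≤ δ) (hδ1 : δ < 1)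
    (hℓ : 1 ≤ ℓ) (hc1 : 1 / (4 * c) ≤ 1) :
    ∫ v in (0 : ℝ)..(1 / (4 * c)),
        Real.sin (Real.pi * c * (1 - δ) * v) / (Real.pi * v) * (1 - v) ^ (ℓ ^ 2)
      ≥ 2 * Real.sqrt 2 * c * (1 - δ) / (Real.pi * (ℓ ^ 2 + 1)) *
          (1 - (1 - 1 / (4 * c)) ^ (ℓ ^ 2 + 1)) :=
  integral_I1a_lower_general c δ ℓ hc hδ0 hδ1 hc1
end

section
/- For any real c ≥ 1 and real ℓ ≥ 1, the absolute value of ∫_{1/c}^{1} (sin(πc v)/(πv)) · (1−v)^{ℓ²} dv is at most (1/π) ∫_{ℓ²/c}^{∞} e^{−u}/u du. -/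
/-!
Since `|sin| ≤ 1` and `1 - v ≤ e^{-v}`, the integrand is bounded by `e^{-ℓ² v} / (π v)`.
Substituting `u = ℓ² v` turns the integral of this bound into
`(1/π) ∫_{ℓ²/c}^{ℓ²} e^{-u}/u du`, and extending the range to `(ℓ²/c, ∞)` only adds
a nonnegative amount.
-/

open Real MeasureTheory Set

lemma integrableOn_exp_neg_div_self_Ioi {a : ℝ} (ha : 0 < a) :
    IntegrableOn (fun u : ℝ => exp (-u) / u) (Ioi a) := by
  refine ((exp_neg_integrableOn_Ioi a one_pos).const_mul a⁻¹).mono' ?_ ?_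
  · exact ((measurable_exp.comp measurable_neg).div measurable_id).aestronglyMeasurable
  · filter_upwards [ae_restrict_mem measurableSet_Ioi] with u (hu : a < u)
    rw [norm_of_nonneg (div_nonneg (exp_pos _).le (ha.trans hu).le), neg_one_mul, div_eq_inv_mul]
    exact mul_le_mul_of_nonneg_right (inv_anti₀ ha hu.le) (exp_pos _).le

lemma intervalIntegral_le_integral_Ioi {f : ℝ → ℝ} {a b : ℝ} (hab : a ≤ b)
    (hf : IntegrableOn f (Ioi a)) (hf0 : ∀ x ∈ Ioi a, 0 ≤ f x) :
    ∫ x in a..b, f x ≤ ∫ x in Ioi a, f x := by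
  rw [intervalIntegral.integral_of_le hab]
  refine setIntegral_mono_set hf ?_ Ioc_subset_Ioi_self.eventuallyLE
  filter_upwards [ae_restrict_mem measurableSet_Ioi] with x hx using hf0 x hx

lemma one_sub_rpow_le_exp_neg_mul {v k : ℝ} (hv : v ≤ 1) (hk : 0 ≤ k) :
    (1 - v) ^ k ≤ exp (-(k * v)) :=
  calc (1 - v) ^ k ≤ exp (-v) ^ k :=
        rpow_le_rpow (by linarith) (by linarith [add_one_le_exp (-v)]) hk
    _ = exp (-(k * v)) := by rw [← exp_mul]; ring_nf

lemma abs_sin_div_mul_one_sub_rpow_le (x : ℝ) {v k : ℝ} (hv₀ : 0 < v) (hv₁ : v ≤ 1)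
    (hk : 0 ≤ k) :
    |sin x / (π * v) * (1 - v) ^ k| ≤ 1 / π * (exp (-(k * v)) / v) := by
  have hpow : 0 ≤ (1 - v) ^ k := rpow_nonneg (by linarith) k
  rw [abs_mul, abs_div, abs_of_nonneg hpow, abs_of_pos (by positivity : 0 < π * v)]
  calc |sin x| / (π * v) * (1 - v) ^ k ≤ 1 / (π * v) * exp (-(k * v)) := by
        gcongr
        · exact abs_sin_le_one x
        · exact one_sub_rpow_le_exp_neg_mul hv₁ hk
    _ = 1 / π * (exp (-(k * v)) / v) := by field_simp

lemma integral_exp_neg_mul_div_self {k : ℝ} (hk : k ≠ 0) (a b : ℝ) :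
    ∫ v in a..b, exp (-(k * v)) / v = ∫ u in k * a..k * b, exp (-u) / u := by
  rw [← intervalIntegral.smul_integral_comp_mul_left (fun u => exp (-u) / u) k, smul_eq_mul,
    ← intervalIntegral.integral_const_mul]
  refine intervalIntegral.integral_congr fun v _ => ?_
  rcases eq_or_ne v 0 with rfl | hv
  · simp
  · field_simp

theorem integral_I2_bound (c ℓ : ℝ) (hc : 1 ≤ c) (hℓ : 1 ≤ ℓ) :
    |∫ v in (1 / c)..(1 : ℝ),
        Real.sin (Real.pi * c * v) / (Real.pi * v) * (1 - v) ^ (ℓ ^ 2)|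
      ≤ 1 / Real.pi * ∫ u in Set.Ioi (ℓ ^ 2 / c), Real.exp (-u) / u := by
  have hc₀ : 0 < c := one_pos.trans_le hc
  have hk : 0 < ℓ ^ 2 := pow_pos (one_pos.trans_le hℓ) 2
  have hc₁ : 1 / c ≤ 1 := (div_le_one hc₀).2 hc
  have hbound : ContinuousOn (fun v => 1 / π * (exp (-(ℓ ^ 2 * v)) / v)) (Icc (1 / c) 1) :=
    fun v hv => by
      have : 0 < v := (one_div_pos.2 hc₀).trans_le hv.1
      fun_prop (disch := positivity)
  calc _ ≤ ∫ v in (1 / c)..1, 1 / π * (exp (-(ℓ ^ 2 * v)) / v) := by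
        refine intervalIntegral.norm_integral_le_of_norm_le (E := ℝ) hc₁
          (.of_forall fun v hv => ?_)
          (hbound.intervalIntegrable_of_Icc hc₁)
        exact abs_sin_div_mul_one_sub_rpow_le _ ((one_div_pos.2 hc₀).trans hv.1) hv.2 hk.le
    _ = 1 / π * ∫ u in ℓ ^ 2 / c..ℓ ^ 2, exp (-u) / u := by
        rw [intervalIntegral.integral_const_mul, integral_exp_neg_mul_div_self hk.ne',
          mul_one_div, mul_one]
    _ ≤ _ := by
        gcongr
        refine intervalIntegral_le_integral_Ioi (div_le_self hk.le hc)
          (integrableOn_exp_neg_div_self_Ioi (by positivity)) fun u hu => ?_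
        have : 0 < u := lt_trans (by positivity) hu
        positivity
end
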